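/- For every integer p ≥ 1 one has β_{2p;2p+1} = [2p+1]!!·Φ_p(q) and β_{2p;2p} = [2p]!!. -/
import Mathlib


open Polynomial Filter

/-- The symmetric q-number `[n] = (q^n - q^{-n})/(q - q⁻¹)`. -/
noncomputable def qnum (q : ℝ) (n : ℕ) : ℝ := (q ^ (n : ℤ) - q ^ (-(n : ℤ))) / (q - q⁻¹)

/-- The q-factorial `[n]! = [1][2]⋯[n]`. -/
noncomputable def qfact (q : ℝ) : ℕ → ℝ
  | 0 => 1
  | n + 1 => qfact q n * qnum q (n + 1)

/-- The even q-double factorial: `evenDF q n = [2n]!! = [2n][2n-2]⋯[2]`. -/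
noncomputable def evenDF (q : ℝ) : ℕ → ℝ
  | 0 => 1
  | n + 1 => qnum q (2 * (n + 1)) * evenDF q n

/-- The odd q-double factorial: `oddDF q n = [2n-1]!! = [2n-1][2n-3]⋯[1]`. -/
noncomputable def oddDF (q : ℝ) : ℕ → ℝ
  | 0 => 1
  | n + 1 => qnum q (2 * n + 1) * oddDF q n

/-- `alphaC q m n = α_{2m-1;n}`, with `α_{-1;n} = 1` and
`α_{2m-1;n} = Σ_{k=2m-1}^{n} [k]·α_{2m-3;k-2}`. -/
noncomputable def alphaC (q : ℝ) : ℕ → ℕ → ℝ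
  | 0, _ => 1
  | m + 1, n => ∑ k ∈ Finset.Icc (2 * m + 1) n, qnum q k * alphaC q m (k - 2)

/-- `betaC q m n = β_{2m;n}`, with `β_{0;n} = 1` and
`β_{2m;n} = Σ_{k=2m}^{n} [k]·β_{2m-2;k-2}`. -/
noncomputable def betaC (q : ℝ) : ℕ → ℕ → ℝ
  | 0, _ => 1
  | m + 1, n => ∑ k ∈ Finset.Icc (2 * m + 2) n, qnum q k * betaC q m (k - 2)

lemma qnum_pos {q : ℝ} (hq : 0 < q) (hq1 : q ≠ 1) {n : ℕ} (hn : 1 ≤ n) : 0 < qnum q n := by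
  have hqn : (0:ℝ) < q ^ n := pow_pos hq n
  unfold qnum
  rw [zpow_neg, zpow_natCast]
  rcases lt_or_gt_of_ne hq1 with h | h
  · have h1 : q ^ n < 1 := pow_lt_one₀ hq.le h (by omega)
    have h2 : 1 < (q ^ n)⁻¹ := (one_lt_inv₀ hqn).2 h1
    have h3 : 1 < q⁻¹ := (one_lt_inv₀ hq).2 h
    exact div_pos_of_neg_of_neg (by linarith) (by linarith)
  · have h1 : 1 < q ^ n := one_lt_pow₀ h (by omega)
    have h2 : (q ^ n)⁻¹ < 1 := inv_lt_one_of_one_lt₀ h1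
    have h3 : q⁻¹ < 1 := inv_lt_one_of_one_lt₀ h
    exact div_pos (by linarith) (by linarith)

lemma qnum_one {q : ℝ} (hq : 0 < q) (hq1 : q ≠ 1) : qnum q 1 = 1 := by
  have : q - q⁻¹ ≠ 0 := by
    intro h
    have : q * q - 1 = 0 := by field_simp at h; linarith
    have : (q-1)*(q+1) = 0 := by ring_nf; linarith
    rcases mul_eq_zero.1 this with h | h
    · exact hq1 (by linarith)
    · linarith
  unfold qnum
  simp [div_self this]

lemma oddDF_pos {q : ℝ} (hq : 0 < q) (hq1 : q ≠ 1) (n : ℕ) : 0 < oddDF q n := by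
  induction n with
  | zero => norm_num [oddDF]
  | succ n ih => exact mul_pos (qnum_pos hq hq1 (by omega)) ih

lemma betaC_diag {q : ℝ} (p : ℕ) : betaC q p (2 * p) = evenDF q p := by
  induction p with
  | zero => simp [betaC, evenDF]
  | succ p ih =>
    have h : 2 * (p + 1) = 2 * p + 2 := by ring
    rw [h, betaC, Finset.Icc_self, Finset.sum_singleton]
    have h2 : 2 * p + 2 - 2 = 2 * p := by omega
    rw [h2, ih, evenDF, h]

/-- For every `p ≥ 1`, `β_{2p;2p+1} = [2p+1]!!·Φ_p(q)` and
`β_{2p;2p} = [2p]!!`. -/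
theorem stmt12 (q : ℝ) (hq : 0 < q) (hq1 : q ≠ 1) (p : ℕ) (hp : 1 ≤ p) :
    (betaC q p (2 * p + 1) =
      oddDF q (p + 1) * (1 + ∑ k ∈ Finset.Icc 1 p, evenDF q k / oddDF q (k + 1))) ∧
    (betaC q p (2 * p) = evenDF q p) := by
  refine ⟨?_, betaC_diag p⟩
  induction p, hp using Nat.le_induction with
  | base =>
    have hICC : Finset.Icc 2 3 = {2, 3} := by decide
    have ho2 : oddDF q 2 = qnum q 3 := by
      simp [oddDF, qnum_one hq hq1]
    have he1 : evenDF q 1 = qnum q 2 := by simp [evenDF]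
    rw [show 2*1+1 = 3 from rfl, betaC, hICC]
    rw [Finset.sum_insert (by decide), Finset.sum_singleton]
    simp only [betaC, Finset.Icc_self, Finset.sum_singleton, ho2, he1]
    have h3 : qnum q 3 ≠ 0 := (qnum_pos hq hq1 (by omega)).ne'
    field_simp
    ring
  | succ p hp ih =>
    have e1 : 2 * (p + 1) + 1 = (2 * p + 2) + 1 := by ring
    rw [e1, betaC,
      Finset.sum_Icc_succ_top (by omega), Finset.Icc_self, Finset.sum_singleton]
    rw [show 2*p+2-2 = 2*p from by omega, show 2*p+2+1-2 = 2*p+1 from by omega]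
    rw [betaC_diag, ih]
    rw [Finset.sum_Icc_succ_top (by omega : 1 ≤ p + 1)]
    rw [show oddDF q (p+1+1) = qnum q (2*(p+1)+1) * oddDF q (p+1) from rfl,
      show evenDF q (p+1) = qnum q (2*(p+1)) * evenDF q p from rfl,
      show 2*(p+1)+1 = 2*p+2+1 from by ring, show 2*(p+1) = 2*p+2 from by ring]
    have h1 : (0:ℝ) < oddDF q (p+1) := oddDF_pos hq hq1 _
    have h2 : (0:ℝ) < qnum q (2*p+2+1) := qnum_pos hq hq1 (by omega)
    field_simp
    ring
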